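/- Let L̄ = L/⟨ι⟩ (a 28-element set), and call a 3-element subset of L̄ liftable if it is the image of a triangle in L (a 3-subset of L with pairwise inner products equal to 1). Then there exists a collection R̄ consisting of exactly 315 four-element subsets of L̄ with the property that a 3-element subset of L̄ is liftable if and only if it is contained in some member of R̄. -/

import Mathlib

/-- The lattice ℤ⁸. -/
abbrev V : Type := Fin 8 → ℤ

/-- The bilinear form with Gram matrix diag(1,−1,…,−1). -/
def B (v w : V) : ℤ := v 0 * w 0 - ∑ i : Fin 7, v i.succ * w i.succ

/-- The class h = (3,−1,…,−1) with ⟨h,h⟩ = 2. -/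
def hh : V := ![3, -1, -1, -1, -1, -1, -1, -1]

/-- The involution ι(v) = ⟨v,h⟩·h − v. -/
def iota (v : V) : V := B v hh • hh - v

/-- L = {v : ⟨v,v⟩ = −1, ⟨v,h⟩ = 1}. -/
def L : Set V := {v | B v v = -1 ∧ B v hh = 1}

/-- F = {v : ⟨v,v⟩ = 0, ⟨v,h⟩ = 2}. -/
def F : Set V := {v | B v v = 0 ∧ B v hh = 2}

/-- L̄ = L/⟨ι⟩, realized as the set of ι-orbits. -/
def Lbar : Set (Set V) := {p | ∃ v ∈ L, p = {v, iota v}}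

/-- F̄ = F/⟨ι⟩, realized as the set of ι-orbits. -/
def Fbar : Set (Set V) := {p | ∃ v ∈ F, p = {v, iota v}}

/-- G = {g ∈ GL₈(ℤ) : g preserves B and g(h) = h}. -/
def G : Subgroup (V ≃ₗ[ℤ] V) where
  carrier := {g | (∀ v w : V, B (g v) (g w) = B v w) ∧ g hh = hh}
  one_mem' := ⟨fun _ _ => rfl, rfl⟩
  mul_mem' := by
    rintro a b ⟨ha1, ha2⟩ ⟨hb1, hb2⟩
    refine ⟨fun v w => ?_, ?_⟩
    · show B (a (b v)) (a (b w)) = B v w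
      rw [ha1, hb1]
    · show a (b hh) = hh
      rw [hb2, ha2]
  inv_mem' := by
    rintro a ⟨ha1, ha2⟩
    refine ⟨fun v w => ?_, ?_⟩
    · show B (a.symm v) (a.symm w) = B v w
      conv_rhs => rw [← a.apply_symm_apply v, ← a.apply_symm_apply w]
      rw [ha1]
    · show a.symm hh = hh
      conv_lhs => rw [← ha2]
      exact a.symm_apply_apply hh

/-- A triangle: a 3-element subset of L with pairwise inner products 1. -/
def IsTriangle (s : Finset V) : Prop :=
  ↑s ⊆ L ∧ s.card = 3 ∧ ∀ a ∈ s, ∀ b ∈ s, a ≠ b → B a b = 1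

/-- A 3-element subset of L̄ is liftable if it is the image of a triangle in L. -/
def Liftable (t : Set (Set V)) : Prop :=
  ∃ s : Finset V, IsTriangle s ∧ t = (fun v => ({v, iota v} : Set V)) '' ↑s

/-!
Write `ℓ, e₁, …, e₇` for the coordinate vectors. Solving `⟨v,v⟩ = -1`, `⟨v,h⟩ = 1` shows that
`L` consists of the 56 classes `eⱼ`, `ℓ - eᵢ - eⱼ` and their `ι`-images, so `L̄` is indexed by the
28 pairs `i < j` in `Fin 8`, each pair `p` having the two lifts `pairLift p` and `ι (pairLift p)`.
Lifts of distinct pairs have product `1` or `0` according as the pairs are disjoint or meet, and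
`ι` exchanges the two values.

A triangle `{a, b, c}` in `L` extends to the tetrad `{a, b, c, 2h - a - b - c}`, so the liftable
triples are exactly the 3-subsets of images of tetrads (4-cliques of `L`). A set of pairs is such
an image iff it can be signed so that two pairs meet exactly when their signs differ; the 4-sets
of pairs admitting such a sign are the perfect matchings and the 4-cycles of `K₈`, and there are
`105 + 210 = 315` of them.
-/

theorem B_eq (v w : V) : B v w = v 0 * w 0 -
    (v 1 * w 1 + v 2 * w 2 + v 3 * w 3 + v 4 * w 4 + v 5 * w 5 + v 6 * w 6 + v 7 * w 7) := by
  simp [B, Fin.sum_univ_succ, add_assoc]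

theorem B_comm (v w : V) : B v w = B w v := by
  simp only [B_eq]; ring

theorem B_sub_left (u v w : V) : B (u - v) w = B u w - B v w := by
  simp only [B_eq, Pi.sub_apply]; ring

theorem B_smul_left (n : ℤ) (v w : V) : B (n • v) w = n * B v w := by
  simp only [B_eq, Pi.smul_apply, smul_eq_mul]; ring

theorem B_hh_hh : B hh hh = 2 := by decide

theorem iota_eq_sub {v : V} (hv : B v hh = 1) : iota v = hh - v := by
  simp [iota, hv]

theorem B_iota_left (v w : V) : B (iota v) w = B v hh * B hh w - B v w := by
  simp only [iota, B_sub_left, B_smul_left]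

theorem B_iota_hh (v : V) : B (iota v) hh = B v hh := by
  rw [B_iota_left, B_hh_hh]; ring

theorem B_iota_iota (v w : V) : B (iota v) (iota w) = B v w := by
  rw [B_iota_left, B_comm hh (iota w), B_iota_hh, B_comm v (iota w), B_iota_left, B_comm hh v,
    B_comm w v]
  ring

theorem iota_iota (v : V) : iota (iota v) = v := by
  rw [iota, B_iota_hh, iota, sub_sub_cancel]

theorem iota_mem_L {v : V} (hv : v ∈ L) : iota v ∈ L :=
  ⟨by rw [B_iota_iota, hv.1], by rw [B_iota_hh, hv.2]⟩

theorem B_iota_left_eq_one_sub {v w : V} (hv : B v hh = 1) (hw : B w hh = 1) :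
    B (iota v) w = 1 - B v w := by
  rw [B_iota_left, hv, B_comm, hw, one_mul]

theorem B_iota_self {v : V} (hv : v ∈ L) : B (iota v) v = 2 := by
  rw [B_iota_left_eq_one_sub hv.2 hv.2, hv.1]; norm_num

def orbit (v : V) : Set V := {v, iota v}

theorem orbit_iota (v : V) : orbit (iota v) = orbit v := by
  rw [orbit, orbit, iota_iota, Set.pair_comm]

theorem orbit_eq_orbit_iff {v w : V} : orbit v = orbit w ↔ v = w ∨ v = iota w := by
  refine ⟨fun h => ?_, ?_⟩
  · exact (h ▸ Set.mem_insert v _ : v ∈ orbit w)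
  · rintro (rfl | rfl)
    exacts [rfl, orbit_iota w]

theorem orbit_ne_of_B_eq_one {v w : V} (hw : w ∈ L) (h : B v w = 1) : orbit v ≠ orbit w := by
  intro heq
  rcases orbit_eq_orbit_iff.1 heq with rfl | rfl
  · rw [hw.1] at h; norm_num at h
  · rw [B_iota_self hw] at h; norm_num at h

theorem injOn_orbit {s : Set V} (hL : s ⊆ L) (hB : s.Pairwise fun v w => B v w = 1) :
    s.InjOn orbit := by
  intro v hv w hw h
  by_contra hne
  exact orbit_ne_of_B_eq_one (hL hw) (hB hv hw hne) h

theorem image_orbit_subset_Lbar {s : Set V} (hL : s ⊆ L) : orbit '' s ⊆ Lbar := by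
  rintro _ ⟨v, hv, rfl⟩
  exact ⟨v, hL hv, rfl⟩

/-- The fourth vertex is `d = 2h - a - b - c`. -/
theorem exists_fourth_of_triangle {a b c : V} (ha : a ∈ L) (hb : b ∈ L) (hc : c ∈ L)
    (hab : B a b = 1) (hac : B a c = 1) (hbc : B b c = 1) :
    ∃ d ∈ L, B d a = 1 ∧ B d b = 1 ∧ B d c = 1 := by
  have hd : ∀ x, B ((2 : ℤ) • hh - a - b - c) x = 2 * B hh x - B a x - B b x - B c x := fun x => by
    simp only [B_sub_left, B_smul_left]
  refine ⟨(2 : ℤ) • hh - a - b - c, ⟨?_, ?_⟩, ?_, ?_, ?_⟩ <;>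
    simp only [hd, B_comm _ ((2 : ℤ) • hh - a - b - c)] <;>
    linarith [ha.1, ha.2, hb.1, hb.2, hc.1, hc.2, B_hh_hh, B_comm a b, B_comm a c, B_comm b c,
      B_comm hh a, B_comm hh b, B_comm hh c]

def IsTetrad (s : Finset V) : Prop :=
  ↑s ⊆ L ∧ s.card = 4 ∧ (s : Set V).Pairwise fun v w => B v w = 1

def tetradImages : Set (Set (Set V)) := {r | ∃ s, IsTetrad s ∧ r = orbit '' ↑s}

theorem subset_Lbar_of_mem_tetradImages {r : Set (Set V)} (hr : r ∈ tetradImages) :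
    r ⊆ Lbar := by
  obtain ⟨s, ⟨hL, -, -⟩, rfl⟩ := hr
  exact image_orbit_subset_Lbar hL

theorem ncard_of_mem_tetradImages {r : Set (Set V)} (hr : r ∈ tetradImages) : r.ncard = 4 := by
  obtain ⟨s, ⟨hL, h4, hB⟩, rfl⟩ := hr
  rw [(injOn_orbit hL hB).ncard_image, Set.ncard_coe_finset, h4]

theorem exists_tetradImages_superset_of_liftable {t : Set (Set V)} (ht : Liftable t) :
    ∃ r ∈ tetradImages, t ⊆ r := by
  obtain ⟨s, ⟨hL, h3, hB⟩, rfl⟩ := ht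
  obtain ⟨a, b, c, hab, hac, hbc, rfl⟩ := Finset.card_eq_three.1 h3
  simp only [Finset.coe_insert, Finset.coe_singleton, Set.insert_subset_iff,
    Set.singleton_subset_iff] at hL
  obtain ⟨ha, hb, hc⟩ := hL
  obtain ⟨d, hd, hda, hdb, hdc⟩ := exists_fourth_of_triangle ha hb hc
    (hB a (by simp) b (by simp) hab) (hB a (by simp) c (by simp) hac)
    (hB b (by simp) c (by simp) hbc)
  have hd_ne : ∀ x ∈ ({a, b, c} : Finset V), d ≠ x ∧ B d x = 1 ∧ B x d = 1 := by
    intro x hx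
    have hdx : B d x = 1 := by
      simp only [Finset.mem_insert, Finset.mem_singleton] at hx
      rcases hx with rfl | rfl | rfl <;> assumption
    refine ⟨?_, hdx, B_comm x d ▸ hdx⟩
    rintro rfl
    rw [hd.1] at hdx; norm_num at hdx
  refine ⟨orbit '' ↑(insert d {a, b, c} : Finset V), ⟨insert d {a, b, c}, ⟨?_, ?_, ?_⟩, rfl⟩,
    Set.image_mono (by simp [Set.subset_insert])⟩
  · simp [Set.insert_subset_iff, ha, hb, hc, hd]
  · rw [Finset.card_insert_of_notMem fun h => (hd_ne d h).1 rfl, h3]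
  · rw [Finset.coe_insert, Set.pairwise_insert]
    exact ⟨hB, fun x hx _ => (hd_ne x hx).2⟩

theorem liftable_of_subset_tetradImages {t r : Set (Set V)} (ht : t.ncard = 3)
    (hr : r ∈ tetradImages) (htr : t ⊆ r) : Liftable t := by
  classical
  obtain ⟨s, ⟨hL, -, hB⟩, rfl⟩ := hr
  set s₀ := s.filter fun v => orbit v ∈ t
  have hs₀ : (s₀ : Set V) ⊆ s := Finset.coe_subset.2 (Finset.filter_subset _ s)
  have himg : orbit '' ↑s₀ = t := by
    ext x
    constructor
    · rintro ⟨v, hv, rfl⟩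
      exact (Finset.mem_filter.1 hv).2
    · intro hx
      obtain ⟨v, hv, rfl⟩ := htr hx
      exact ⟨v, Finset.mem_filter.2 ⟨hv, hx⟩, rfl⟩
  have hL₀ := hs₀.trans hL
  have hB₀ := hB.mono hs₀
  refine ⟨s₀, ⟨hL₀, ?_, hB₀⟩, himg.symm⟩
  rw [← Set.ncard_coe_finset, ← (injOn_orbit hL₀ hB₀).ncard_image, himg, ht]

theorem liftable_iff {t : Set (Set V)} (ht : t.ncard = 3) :
    Liftable t ↔ ∃ r ∈ tetradImages, t ⊆ r :=
  ⟨exists_tetradImages_superset_of_liftable, fun ⟨_, hr, htr⟩ =>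
    liftable_of_subset_tetradImages ht hr htr⟩

def κ : V := ![2, -1, -1, -1, -1, -1, -1, -1]

/-- Bitangents are indexed by pairs `i < j` in `Fin 8`: with `ℓ` and `e₁, …, e₇` the coordinate
vectors, `pairLift (0, j) = e_j` and `pairLift (i, j) = 2ℓ - ∑_{k ∉ {i, j}} e_k` for `i ≠ 0`. -/
def pairLift (p : Fin 8 × Fin 8) : V :=
  if p.1 = 0 then Pi.single p.2 1 else κ + Pi.single p.1 1 + Pi.single p.2 1

def pairList : List (Fin 8 × Fin 8) :=
  (List.finRange 8).flatMap fun j => ((List.finRange 8).filter (· < j)).map fun i => (i, j)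

theorem mem_pairList {p : Fin 8 × Fin 8} : p ∈ pairList ↔ p.1 < p.2 := by
  obtain ⟨i, j⟩ := p
  simp [pairList]

theorem nodup_pairList : pairList.Nodup := by decide

def Meets (p q : Fin 8 × Fin 8) : Prop := p.1 = q.1 ∨ p.1 = q.2 ∨ p.2 = q.1 ∨ p.2 = q.2

instance : DecidableRel Meets := fun p q => by unfold Meets; infer_instance

theorem B_pairLift_hh : ∀ p ∈ pairList, B (pairLift p) hh = 1 := by decide +kernel

theorem B_pairLift_pairLift : ∀ p ∈ pairList, ∀ q ∈ pairList,
    B (pairLift p) (pairLift q) = if p = q then -1 else if Meets p q then 0 else 1 := by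
  decide +kernel

theorem pairLift_mem_L {p : Fin 8 × Fin 8} (hp : p ∈ pairList) : pairLift p ∈ L :=
  ⟨by simpa using B_pairLift_pairLift p hp p hp, B_pairLift_hh p hp⟩

def signedLift (p : Fin 8 × Fin 8) (ε : Bool) : V := if ε then pairLift p else iota (pairLift p)

theorem signedLift_mem_L {p : Fin 8 × Fin 8} (hp : p ∈ pairList) (ε : Bool) :
    signedLift p ε ∈ L := by
  cases ε
  exacts [iota_mem_L (pairLift_mem_L hp), pairLift_mem_L hp]

theorem B_signedLift_eq_one_iff {p q : Fin 8 × Fin 8} (hp : p ∈ pairList) (hq : q ∈ pairList)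
    (hpq : p ≠ q) (ε δ : Bool) :
    B (signedLift p ε) (signedLift q δ) = 1 ↔ (Meets p q ↔ ε ≠ δ) := by
  have h := B_pairLift_pairLift p hp q hq
  rw [if_neg hpq] at h
  have hp' := B_pairLift_hh p hp
  have hq' := B_pairLift_hh q hq
  cases ε <;> cases δ <;> simp only [signedLift, Bool.false_eq_true, if_false, if_true]
  · rw [B_iota_iota, h]; split_ifs <;> simp_all
  · rw [B_iota_left_eq_one_sub hp' hq', h]; split_ifs <;> simp_all
  · rw [B_comm, B_iota_left_eq_one_sub hq' hp', B_comm, h]; split_ifs <;> simp_all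
  · rw [h]; split_ifs <;> simp_all

def bitangent (p : Fin 8 × Fin 8) : Set V := orbit (pairLift p)

theorem orbit_signedLift (p : Fin 8 × Fin 8) (ε : Bool) : orbit (signedLift p ε) = bitangent p := by
  cases ε
  exacts [orbit_iota _, rfl]

theorem injOn_bitangent : Set.InjOn bitangent {p | p ∈ pairList} := by
  intro p hp q hq h
  by_contra hpq
  have hB := (B_signedLift_eq_one_iff hp hq hpq (!decide (Meets p q)) true).2 (by simp)
  exact orbit_ne_of_B_eq_one (signedLift_mem_L hq true) hB (by rw [orbit_signedLift, h]; rfl)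

theorem hh_zero : hh 0 = 3 := rfl

theorem hh_succ (i : Fin 7) : hh i.succ = -1 := by fin_cases i <;> rfl

theorem κ_zero : κ 0 = 2 := rfl

theorem κ_succ (i : Fin 7) : κ i.succ = -1 := by fin_cases i <;> rfl

theorem B_self_eq (v : V) : B v v = v 0 ^ 2 - ∑ i : Fin 7, v i.succ ^ 2 := by
  simp [B, sq]

theorem B_hh_eq (v : V) : B v hh = 3 * v 0 + ∑ i : Fin 7, v i.succ := by
  simp [B, hh_zero, hh_succ]
  ring

theorem apply_zero_mem_Icc {v : V} (hv : v ∈ L) : v 0 ∈ Set.Icc 0 3 := by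
  have h1 := hv.1
  have h2 := hv.2
  rw [B_self_eq] at h1
  rw [B_hh_eq] at h2
  have cs := sq_sum_le_card_mul_sum_sq (s := Finset.univ) (f := fun i : Fin 7 => v i.succ)
  simp only [Finset.card_univ, Fintype.card_fin] at cs
  rw [show ∑ i : Fin 7, v i.succ = 1 - 3 * v 0 by linarith,
    show ∑ i : Fin 7, v i.succ ^ 2 = v 0 ^ 2 + 1 by linarith] at cs
  push_cast at cs
  have key : (v 0 + 1) * (v 0 - 4) < 0 := by nlinarith
  constructor
  · by_contra h
    nlinarith [show v 0 + 1 ≤ 0 by omega]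
  · by_contra h
    nlinarith [show 0 ≤ v 0 - 4 by omega]

/-- Each term `yᵢ (yᵢ - 1)` of the vanishing sum `∑ (yᵢ² - yᵢ)` is nonnegative. -/
theorem exists_indicator_of_sum_sq_eq_sum {ι : Type*} [Fintype ι] [DecidableEq ι] {y : ι → ℤ}
    (h : ∑ i, y i ^ 2 = ∑ i, y i) :
    ∃ S : Finset ι, (S.card : ℤ) = ∑ i, y i ∧ ∀ i, y i = if i ∈ S then 1 else 0 := by
  have hnonneg : ∀ i ∈ Finset.univ, 0 ≤ y i ^ 2 - y i := fun i _ => by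
    rcases le_or_gt (y i) 0 with h | h <;> nlinarith
  have hzero := (Finset.sum_eq_zero_iff_of_nonneg hnonneg).1 (by
    rw [Finset.sum_sub_distrib, h, sub_self])
  have h01 : ∀ i, y i = 0 ∨ y i = 1 := fun i => by
    have := hzero i (Finset.mem_univ i)
    rcases mul_eq_zero.1 (show y i * (y i - 1) = 0 by linarith) with h | h
    exacts [Or.inl h, Or.inr (by linarith)]
  have hy : ∀ i, y i = if i ∈ Finset.univ.filter (y · = 1) then 1 else 0 := fun i => by
    rcases h01 i with h | h <;> simp [h]
  refine ⟨Finset.univ.filter (y · = 1), ?_, hy⟩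
  rw [Finset.natCast_card_filter]
  exact Finset.sum_congr rfl fun i _ => by rcases h01 i with h | h <;> simp [h]

theorem exists_pairLift_eq_of_apply_zero_eq_zero {v : V} (hv : v ∈ L) (h0 : v 0 = 0) :
    ∃ p ∈ pairList, v = pairLift p := by
  have h1 := hv.1
  have h2 := hv.2
  rw [B_self_eq, h0] at h1
  rw [B_hh_eq, h0] at h2
  obtain ⟨S, hS, hx⟩ := exists_indicator_of_sum_sq_eq_sum (y := fun i : Fin 7 => v i.succ)
    (by linarith)
  obtain ⟨j, rfl⟩ := Finset.card_eq_one.1 (by omega : S.card = 1)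
  refine ⟨(0, j.succ), mem_pairList.2 (Fin.succ_pos j), funext fun k => ?_⟩
  refine Fin.cases ?_ (fun i => ?_) k
  · simp [pairLift, h0]
  · simp [pairLift, hx i, Pi.single_apply]

theorem exists_iota_pairLift_eq_of_apply_zero_eq_one {v : V} (hv : v ∈ L) (h1 : v 0 = 1) :
    ∃ p ∈ pairList, v = iota (pairLift p) := by
  have e1 := hv.1
  have e2 := hv.2
  rw [B_self_eq, h1] at e1
  rw [B_hh_eq, h1] at e2
  obtain ⟨S, hS, hx⟩ := exists_indicator_of_sum_sq_eq_sum (y := fun i : Fin 7 => -v i.succ)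
    (by simp only [neg_sq, Finset.sum_neg_distrib]; linarith)
  rw [Finset.sum_neg_distrib] at hS
  obtain ⟨i, j, hij, hS2⟩ := Finset.card_eq_two.1 (by omega : S.card = 2)
  wlog hlt : i < j generalizing i j
  · exact this j i hij.symm (by rw [hS2, Finset.pair_comm]) (lt_of_le_of_ne (not_lt.1 hlt) hij.symm)
  subst hS2
  refine ⟨(i.succ, j.succ), mem_pairList.2 (Fin.succ_lt_succ_iff.2 hlt), funext fun k => ?_⟩
  rw [iota_eq_sub (B_pairLift_hh _ (mem_pairList.2 (Fin.succ_lt_succ_iff.2 hlt)))]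
  refine Fin.cases ?_ (fun m => ?_) k
  · simp [pairLift, h1, hh_zero, κ_zero, Fin.succ_ne_zero]
  · have := hx m
    simp only [Finset.mem_insert, Finset.mem_singleton] at this
    simp [pairLift, hh_succ, κ_succ, Pi.single_apply]
    split_ifs at this ⊢ <;> omega

theorem exists_signedLift_eq {v : V} (hv : v ∈ L) : ∃ p ∈ pairList, ∃ ε, v = signedLift p ε := by
  have hι : iota v 0 = 3 - v 0 := by simp [iota_eq_sub hv.2, hh_zero]
  obtain ⟨h0, h3⟩ := apply_zero_mem_Icc hv
  rcases (by omega : v 0 = 0 ∨ v 0 = 1 ∨ v 0 = 2 ∨ v 0 = 3) with h | h | h | h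
  · obtain ⟨p, hp, rfl⟩ := exists_pairLift_eq_of_apply_zero_eq_zero hv h
    exact ⟨p, hp, true, rfl⟩
  · obtain ⟨p, hp, rfl⟩ := exists_iota_pairLift_eq_of_apply_zero_eq_one hv h
    exact ⟨p, hp, false, rfl⟩
  · obtain ⟨p, hp, hp'⟩ := exists_iota_pairLift_eq_of_apply_zero_eq_one (iota_mem_L hv) (by omega)
    exact ⟨p, hp, true, by rw [← iota_iota v, hp', iota_iota]; rfl⟩
  · obtain ⟨p, hp, hp'⟩ := exists_pairLift_eq_of_apply_zero_eq_zero (iota_mem_L hv) (by omega)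
    exact ⟨p, hp, false, by rw [← iota_iota v, hp']; rfl⟩

def EvenTriple (a p q : Fin 8 × Fin 8) : Prop := Meets p q ↔ (Meets a p ↔ ¬Meets a q)

instance (a : Fin 8 × Fin 8) : DecidableRel (EvenTriple a) := fun p q => by
  unfold EvenTriple; infer_instance

def Coherent : List (Fin 8 × Fin 8) → Prop
  | [] => True
  | a :: l => l.Pairwise (EvenTriple a)

instance : DecidablePred Coherent := fun l => by
  cases l <;> unfold Coherent <;> infer_instance

/-- A set of bitangents lifts to a clique iff it carries a sign `ε` with `Meets p q ↔ ε p ≠ ε q`;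
relative to a base point `a` such a sign is forced, so only triples through `a` need checking. -/
theorem coherent_iff_exists_sign {l : List (Fin 8 × Fin 8)} (hl : l.Nodup) :
    Coherent l ↔ ∃ ε : Fin 8 × Fin 8 → Bool, l.Pairwise fun p q => Meets p q ↔ ε p ≠ ε q := by
  rcases l with _ | ⟨a, l⟩
  · simp [Coherent]
  rw [List.nodup_cons] at hl
  simp only [Coherent, List.pairwise_cons]
  constructor
  · intro h
    refine ⟨fun q => decide (q = a ∨ ¬Meets a q), fun q hq => ?_,
      h.imp_of_mem fun {p q} hp hq he => ?_⟩
    · have : q ≠ a := fun h => hl.1 (h ▸ hq)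
      simp [this]
    · have hpa : p ≠ a := fun h => hl.1 (h ▸ hp)
      have hqa : q ≠ a := fun h => hl.1 (h ▸ hq)
      simp only [EvenTriple] at he
      by_cases hap : Meets a p <;> by_cases haq : Meets a q <;> simp [hpa, hqa, he, hap, haq]
  · rintro ⟨ε, ha, h⟩
    refine h.imp_of_mem fun hp hq he => ?_
    rw [EvenTriple, he, ha _ hp, ha _ hq]
    cases ε a <;> cases ε _ <;> cases ε _ <;> decide

def pairImage (l : List (Fin 8 × Fin 8)) : Set (Set V) := bitangent '' {p | p ∈ l}

theorem pairImage_mem_tetradImages {l : List (Fin 8 × Fin 8)} (hl : l ∈ pairList.sublistsLen 4)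
    (hc : Coherent l) : pairImage l ∈ tetradImages := by
  obtain ⟨hsub, hlen⟩ := List.mem_sublistsLen.1 hl
  have hnd := hsub.nodup nodup_pairList
  obtain ⟨ε, hε⟩ := (coherent_iff_exists_sign hnd).1 hc
  set lifts := l.map fun p => signedLift p (ε p)
  have hL : ∀ v ∈ lifts, v ∈ L := by
    simp only [lifts, List.mem_map]
    rintro _ ⟨p, hp, rfl⟩
    exact signedLift_mem_L (hsub.subset hp) _
  have hB : lifts.Pairwise fun v w => B v w = 1 := List.pairwise_map.2 <|
    (hε.and hnd).imp_of_mem fun hp hq ⟨he, hne⟩ =>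
      (B_signedLift_eq_one_iff (hsub.subset hp) (hsub.subset hq) hne _ _).2 he
  have hnd' : lifts.Nodup := hB.imp_of_mem fun hv _ h heq => by
    subst heq; rw [(hL _ hv).1] at h; norm_num at h
  have : Std.Symm fun v w : V => B v w = 1 := ⟨fun v w h => by rwa [B_comm]⟩
  refine ⟨lifts.toFinset, ⟨?_, ?_, ?_⟩, ?_⟩
  · intro v hv; exact hL v (List.mem_toFinset.1 hv)
  · rw [List.toFinset_card_of_nodup hnd', List.length_map, hlen]
  · rw [List.coe_toFinset]; exact hB.set_pairwise
  · ext x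
    simp [pairImage, lifts, orbit_signedLift]

theorem exists_coherent_of_mem_tetradImages {r : Set (Set V)} (hr : r ∈ tetradImages) :
    ∃ l ∈ pairList.sublistsLen 4, Coherent l ∧ r = pairImage l := by
  classical
  obtain ⟨s, ⟨hL, h4, hB⟩, rfl⟩ := hr
  set l := pairList.filter fun p => bitangent p ∈ orbit '' ↑s
  have hsub : l.Sublist pairList := List.filter_sublist
  have hnd : l.Nodup := hsub.nodup nodup_pairList
  have himg : orbit '' ↑s = pairImage l := by
    ext x
    simp only [pairImage, l, List.mem_filter, decide_eq_true_eq, Set.mem_image]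
    constructor
    · rintro ⟨v, hv, rfl⟩
      obtain ⟨p, hp, ε, rfl⟩ := exists_signedLift_eq (hL hv)
      exact ⟨p, ⟨hp, _, hv, orbit_signedLift p ε⟩, (orbit_signedLift p ε).symm⟩
    · rintro ⟨p, ⟨-, hp⟩, rfl⟩
      exact hp
  have hlen : l.length = 4 := by
    have h := (injOn_bitangent.mono (s₁ := {p | p ∈ l}) fun p hp => hsub.subset hp).ncard_image
    change (pairImage l).ncard = _ at h
    rw [← himg, (injOn_orbit hL hB).ncard_image, Set.ncard_coe_finset, h4, ← List.coe_toFinset,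
      Set.ncard_coe_finset, List.toFinset_card_of_nodup hnd] at h
    exact h.symm
  have hsign : ∀ p ∈ l, ∃ ε, signedLift p ε ∈ s := by
    intro p hp
    obtain ⟨v, hv, hvp⟩ := (List.mem_filter.1 hp).2 |> of_decide_eq_true
    rcases orbit_eq_orbit_iff.1 hvp with rfl | rfl
    exacts [⟨true, hv⟩, ⟨false, hv⟩]
  choose! ε hε using hsign
  refine ⟨l, List.mem_sublistsLen.2 ⟨hsub, hlen⟩, (coherent_iff_exists_sign hnd).2 ⟨ε, ?_⟩, himg⟩
  refine hnd.pairwise_of_forall_ne fun p hp q hq hpq => ?_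
  have hne : signedLift p (ε p) ≠ signedLift q (ε q) := fun h => hpq <|
    injOn_bitangent (hsub.subset hp) (hsub.subset hq) <| by
      rw [← orbit_signedLift p (ε p), h, orbit_signedLift]
  exact (B_signedLift_eq_one_iff (hsub.subset hp) (hsub.subset hq) hpq _ _).1
    (hB (hε p hp) (hε q hq) hne)

theorem tetradImages_eq :
    tetradImages = pairImage '' {l | l ∈ (pairList.sublistsLen 4).filter (Coherent ·)} := by
  ext r
  simp only [Set.mem_image, List.mem_filter, decide_eq_true_eq]
  constructor
  · intro hr
    obtain ⟨l, hl, hc, rfl⟩ := exists_coherent_of_mem_tetradImages hr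
    exact ⟨l, ⟨hl, hc⟩, rfl⟩
  · rintro ⟨l, ⟨hl, hc⟩, rfl⟩
    exact pairImage_mem_tetradImages hl hc

theorem injOn_pairImage : Set.InjOn pairImage {l | l.Sublist pairList} := by
  intro l₁ h₁ l₂ h₂ h
  have hmem := (injOn_bitangent.image_eq_image_iff (fun p hp => h₁.subset hp)
    (fun p hp => h₂.subset hp)).1 h
  refine (nodup_pairList.perm_iff_eq_of_sublist h₁ h₂).1 <|
    (List.perm_ext_iff_of_nodup (h₁.nodup nodup_pairList) (h₂.nodup nodup_pairList)).2 fun p => ?_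
  exact Set.ext_iff.1 hmem p

theorem length_filter_coherent :
    ((pairList.sublistsLen 4).filter (Coherent ·)).length = 315 := by
  decide +kernel

theorem ncard_tetradImages : tetradImages.ncard = 315 := by
  rw [tetradImages_eq, (injOn_pairImage.mono fun l hl => ?_).ncard_image, ← List.coe_toFinset,
    Set.ncard_coe_finset,
    List.toFinset_card_of_nodup ((List.nodup_sublistsLen 4 nodup_pairList).filter _),
    length_filter_coherent]
  exact (List.mem_sublistsLen.1 (List.mem_filter.1 hl).1).1

/-- there is a collection R̄ of exactly 315 four-element subsets of L̄ such
that a 3-element subset of L̄ is liftable iff it is contained in a member of R̄. -/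
theorem stmt8 :
    ∃ R : Set (Set (Set V)), R.ncard = 315 ∧
      (∀ r ∈ R, r ⊆ Lbar ∧ r.ncard = 4) ∧
      (∀ t : Set (Set V), t ⊆ Lbar → t.ncard = 3 →
        (Liftable t ↔ ∃ r ∈ R, t ⊆ r)) :=
  ⟨tetradImages, ncard_tetradImages,
    fun _ hr => ⟨subset_Lbar_of_mem_tetradImages hr, ncard_of_mem_tetradImages hr⟩,
    fun _ _ ht => liftable_iff ht⟩
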